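/- arXiv:2410.08670 — 8 statements merged into one kernel-verified Lean document; each statement's English description precedes it below -/
import Mathlib

section
/- Common-core existence: In a layered DAG with n = 3f+1 nodes per round where every valid block at round r+1 references at least 2f+1 blocks of round r, for any round r there exists a block b at round r such that every valid block at round r+2 has a directed path (of length 2) to b. -/
/-!
Fix 2f+1 blocks `S` of round `r`. By quorum intersection inside the at most 3f+1 blocks of a
round, every block of round r+1 references at least f+1 blocks of `S`. Double counting the
references from the at least 2f+1 honest blocks of round r+1 into `S` then yields some `b ∈ S`
referenced by at least f+1 of them, and by quorum intersection once more the 2f+1 references of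
any round-(r+2) block must hit one of these.
-/

open Finset

namespace Finset

variable {α β : Type*}

theorem le_card_filter_of_subset {s u : Finset α} {k : ℕ} (p : α → Prop) [DecidablePred p]
    (hsu : s ⊆ u) (hk : #u + k ≤ #s + #(u.filter p)) : k ≤ #(s.filter p) := by
  have hs := card_filter_add_card_filter_not (s := s) p
  have hu := card_filter_add_card_filter_not (s := u) p
  have hnot := card_le_card (filter_subset_filter (fun a => ¬p a) hsu)
  omega

theorem exists_lt_card_bipartiteBelow (r : α → β → Prop) [∀ a b, Decidable (r a b)]
    {s : Finset α} {t : Finset β} {m n : ℕ}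
    (hm : ∀ a ∈ s, m ≤ #(t.bipartiteAbove r a)) (hlt : #t * n < #s * m) :
    ∃ b ∈ t, n < #(s.bipartiteBelow r b) := by
  by_contra! hn
  exact hlt.not_ge (card_mul_le_card_mul r hm hn)

end Finset

theorem common_core_exists_general {α : Type*}
    (f : ℕ) (blocks honest : ℕ → Finset α)
    (ref : α → α → Prop) [∀ a b, Decidable (ref a b)]
    (hsize : ∀ r, (blocks r).card ≤ 3 * f + 1)
    (hhonest_sub : ∀ r, honest r ⊆ blocks r)
    (hhonest_card : ∀ r, 2 * f + 1 ≤ (honest r).card)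
    (href : ∀ r, ∀ b ∈ blocks (r + 1),
      2 * f + 1 ≤ ((blocks r).filter (fun c => ref b c)).card)
    (r : ℕ) :
    ∃ b ∈ blocks r, ∀ c ∈ blocks (r + 2),
      ∃ m ∈ blocks (r + 1), ref c m ∧ ref m b := by
  obtain ⟨S, hS_honest, hS_card⟩ := exists_subset_card_eq (hhonest_card r)
  have hS_blocks : S ⊆ blocks r := hS_honest.trans (hhonest_sub r)
  set T := honest (r + 1)
  have hT_refs_S : ∀ m ∈ T, f + 1 ≤ #(S.bipartiteAbove ref m) := fun m hm =>
    le_card_filter_of_subset (fun c => ref m c) hS_blocks <| by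
      have := href r m (hhonest_sub (r + 1) hm)
      have := hsize r
      omega
  obtain ⟨b, hbS, hb_refs⟩ := exists_lt_card_bipartiteBelow ref (n := f) hT_refs_S <| by
    have := hhonest_card (r + 1)
    rw [hS_card]
    nlinarith
  refine ⟨b, hS_blocks hbS, fun c hc => ?_⟩
  have hc_refs : 1 ≤ #((T.bipartiteBelow ref b).filter (fun m => ref c m)) :=
    le_card_filter_of_subset (fun m => ref c m)
      ((filter_subset _ _).trans (hhonest_sub (r + 1))) <| by
      have := href (r + 1) c hc
      have := hsize (r + 1)
      omega
  obtain ⟨m, hm⟩ := card_pos.mp hc_refs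
  simp only [bipartiteBelow, mem_filter] at hm
  obtain ⟨⟨hmT, hmb⟩, hcm⟩ := hm
  exact ⟨m, hhonest_sub (r + 1) hmT, hcm, hmb⟩

theorem common_core_exists {α : Type*} [DecidableEq α]
    (f : ℕ) (blocks honest : ℕ → Finset α)
    (ref : α → α → Prop) [∀ a b, Decidable (ref a b)]
    (hsize : ∀ r, (blocks r).card ≤ 3 * f + 1)
    (hhonest_sub : ∀ r, honest r ⊆ blocks r)
    (hhonest_card : ∀ r, 2 * f + 1 ≤ (honest r).card)
    (href : ∀ r, ∀ b ∈ blocks (r + 1),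
      2 * f + 1 ≤ ((blocks r).filter (fun c => ref b c)).card)
    (r : ℕ) :
    ∃ b ∈ blocks r, ∀ c ∈ blocks (r + 2),
      ∃ m ∈ blocks (r + 1), ref c m ∧ ref m b :=
  common_core_exists_general f blocks honest ref hsize hhonest_sub hhonest_card href r
end

section
/- Certificate propagation by induction: if at round r at least 2f+1 blocks (from distinct validators) certify a block b, then every valid block at any round r' > r has a path to at least one round-r certificate of b. -/
theorem certificate_propagation {α : Type*} [DecidableEq α]
    (f : ℕ) (blocks : ℕ → Finset α)
    (ref : α → α → Prop) [∀ a b, Decidable (ref a b)]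
    (hsize : ∀ k, (blocks k).card ≤ 3 * f + 1)
    (href : ∀ k, ∀ b ∈ blocks (k + 1),
      2 * f + 1 ≤ ((blocks k).filter (fun c => ref b c)).card)
    (hrefround : ∀ k, ∀ b ∈ blocks (k + 1), ∀ c, ref b c → c ∈ blocks k)
    (r : ℕ) (cert : Finset α)
    (hcert_sub : cert ⊆ blocks r) (hcert_card : 2 * f + 1 ≤ cert.card) :
    ∀ r', r < r' → ∀ b ∈ blocks r',
      ∃ c ∈ cert, Relation.TransGen ref b c := by
  intro r'
  induction r' with
  | zero => omega
  | succ k ih =>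
    intro hlt b hb
    rcases Nat.lt_succ_iff_lt_or_eq.mp hlt with h | h
    · -- r < k : pick any referenced block in round k
      have hpos : 0 < ((blocks k).filter (fun c => ref b c)).card := by
        have := href k b hb; omega
      obtain ⟨c', hc'⟩ := Finset.card_pos.mp hpos
      rw [Finset.mem_filter] at hc'
      obtain ⟨c, hc, hpath⟩ := ih h c' hc'.1
      exact ⟨c, hc, (Relation.TransGen.single hc'.2).trans hpath⟩
    · -- k = r : quorum intersection
      subst h
      have hint : 0 < (cert ∩ (blocks r).filter (fun c => ref b c)).card := by
        have h1 := href r b hb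
        have h2 := hsize r
        have hu : (cert ∪ (blocks r).filter (fun c => ref b c)).card ≤ 3 * f + 1 := by
          refine le_trans (Finset.card_le_card ?_) h2
          intro x hx
          rcases Finset.mem_union.mp hx with h | h
          · exact hcert_sub h
          · exact (Finset.mem_filter.mp h).1
        have := Finset.card_union_add_card_inter cert
          ((blocks r).filter (fun c => ref b c))
        omega
      obtain ⟨c, hc⟩ := Finset.card_pos.mp hint
      rw [Finset.mem_inter, Finset.mem_filter] at hc
      exact ⟨c, hc.1, Relation.TransGen.single hc.2.2⟩
end

section
/- At most one block per (validator, round) can be certified: if certifying a block requires 2f+1 votes, every vote-round block votes for at most one block of a given validator and round, honest validators produce at most one vote-round block each, and at most f validators are Byzantine, then two distinct blocks b ≠ b' of the same validator and round cannot both have certificates. -/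
theorem at_most_one_certified {ι α : Type*} [DecidableEq ι]
    (f : ℕ) (V H : Finset ι)
    (hV : V.card = 3 * f + 1)
    (hH : H ⊆ V) (hByz : (V \ H).card ≤ f)
    (votes : ι → α → Prop)
    (b b' : α) (hne : b ≠ b')
    -- an honest validator's unique vote-round block votes for at most one
    -- proposal of a given validator and round (b and b' are two such proposals)
    (hhonest : ∀ v ∈ H, ¬ (votes v b ∧ votes v b'))
    -- certificate for b: ≥ 2f+1 validators whose vote-blocks vote for b
    (A : Finset ι) (hA : A ⊆ V) (hAcard : 2 * f + 1 ≤ A.card)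
    (hAvotes : ∀ v ∈ A, votes v b)
    -- certificate for b'
    (B : Finset ι) (hB : B ⊆ V) (hBcard : 2 * f + 1 ≤ B.card)
    (hBvotes : ∀ v ∈ B, votes v b') :
    False := by
  have hUnion : (A ∪ B).card ≤ 3 * f + 1 := hV ▸ Finset.card_le_card (Finset.union_subset hA hB)
  have hInter : f + 1 ≤ (A ∩ B).card := by
    have := Finset.card_union_add_card_inter A B
    omega
  have hsub : A ∩ B ⊆ V := fun x hx => hA (Finset.mem_inter.mp hx).1
  have : ((A ∩ B) \ (V \ H)).Nonempty := by
    rw [← Finset.card_pos]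
    have h2 : (A ∩ B).card ≤ ((A ∩ B) \ (V \ H)).card + (V \ H).card :=
      Finset.card_le_card_sdiff_add_card
    omega
  obtain ⟨v, hv⟩ := this
  rw [Finset.mem_sdiff, Finset.mem_inter, Finset.mem_sdiff] at hv
  obtain ⟨⟨hvA, hvB⟩, hvH⟩ := hv
  have hvH' : v ∈ H := by
    by_contra h
    exact hvH ⟨hsub (Finset.mem_inter.mpr ⟨hvA, hvB⟩), h⟩
  exact hhonest v hvH' ⟨hAvotes v hvA, hBvotes v hvB⟩
end

section
/- If an honest validator directly commits a block b in slot s (seeing 2f+1 vote-round blocks voting for b), then no honest validator can directly skip slot s (seeing 2f+1 vote-round blocks not voting for b), assuming honest validators produce at most one vote-round block and at most f of the 3f+1 validators are Byzantine. -/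
theorem no_direct_commit_and_skip {ι : Type*} [DecidableEq ι]
    (f : ℕ) (V H : Finset ι)
    (hV : V.card = 3 * f + 1)
    (hH : H ⊆ V) (hByz : (V \ H).card ≤ f)
    -- voteA v: the vote-round block of validator v, as seen by the committing
    -- validator, votes for b; voteB v: as seen by the skipping validator
    (voteA voteB : ι → Prop)
    -- honest validators produce at most one vote-round block
    (hhonest : ∀ v ∈ H, (voteA v ↔ voteB v))
    (A : Finset ι) (hA : A ⊆ V) (hAcard : 2 * f + 1 ≤ A.card)
    (hAvotes : ∀ v ∈ A, voteA v)
    (B : Finset ι) (hB : B ⊆ V) (hBcard : 2 * f + 1 ≤ B.card)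
    (hBvotes : ∀ v ∈ B, ¬ voteB v) :
    False := by
  have hunion : (A ∪ B).card ≤ 3 * f + 1 := by
    rw [← hV]; exact Finset.card_le_card (Finset.union_subset hA hB)
  have hinter : f + 1 ≤ (A ∩ B).card := by
    have := Finset.card_union_add_card_inter A B
    omega
  have hdiff : ((A ∩ B) \ (V \ H)).Nonempty := by
    rw [← Finset.card_pos]
    have := Finset.card_le_card_sdiff_add_card (s := A ∩ B) (t := V \ H)
    omega
  obtain ⟨v, hv⟩ := hdiff
  simp only [Finset.mem_sdiff, Finset.mem_inter] at hv
  obtain ⟨⟨hvA, hvB⟩, hvH⟩ := hv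
  have hvV : v ∈ V := hA hvA
  have hvH' : v ∈ H := by
    by_contra h
    exact hvH ⟨hvV, h⟩
  exact hBvotes v hvB ((hhonest v hvH').mp (hAvotes v hvA))
end

section
/- Vote quorum for the common core set (w=5): in a layered DAG where each block references ≥ 2f+1 previous-round blocks, for any round r there exists a set S of at least 2f+1 round-r blocks such that every valid round-(r+3) block has a path to every block of S. -/
theorem common_core_vote_quorum {α : Type*} [DecidableEq α]
    (f : ℕ) (blocks honest : ℕ → Finset α)
    (ref : α → α → Prop) [∀ a b, Decidable (ref a b)]
    (hsize : ∀ r, (blocks r).card ≤ 3 * f + 1)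
    (hhonest_sub : ∀ r, honest r ⊆ blocks r)
    (hhonest_card : ∀ r, 2 * f + 1 ≤ (honest r).card)
    (href : ∀ r, ∀ b ∈ blocks (r + 1),
      2 * f + 1 ≤ ((blocks r).filter (fun c => ref b c)).card)
    (r : ℕ) :
    ∃ S ⊆ blocks r, 2 * f + 1 ≤ S.card ∧
      ∀ c ∈ blocks (r + 3), ∀ b ∈ S,
        ∃ m₂ ∈ blocks (r + 2), ∃ m₁ ∈ blocks (r + 1),
          ref c m₂ ∧ ref m₂ m₁ ∧ ref m₁ b := by
  set B1 := blocks (r + 1)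
  set B2 := blocks (r + 2)
  -- there is b ∈ B1 referenced by at least f+1 blocks of B2
  have hB2card : 2 * f + 1 ≤ B2.card :=
    le_trans (hhonest_card (r + 2)) (Finset.card_le_card (hhonest_sub (r + 2)))
  have hsum : (2 * f + 1) * (2 * f + 1) ≤ ∑ b ∈ B1, (B2.filter (fun m => ref m b)).card := by
    have hswap : ∑ b ∈ B1, (B2.filter (fun m => ref m b)).card
        = ∑ m ∈ B2, (B1.filter (fun b => ref m b)).card := by
      simp only [Finset.card_filter]
      exact Finset.sum_comm
    rw [hswap]
    calc (2 * f + 1) * (2 * f + 1) ≤ B2.card * (2 * f + 1) :=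
          Nat.mul_le_mul_right _ hB2card
      _ ≤ ∑ m ∈ B2, (B1.filter (fun b => ref m b)).card := by
          calc B2.card * (2 * f + 1) = ∑ _m ∈ B2, (2 * f + 1) := by
                rw [Finset.sum_const, smul_eq_mul]
            _ ≤ _ := Finset.sum_le_sum (fun m hm => href (r + 1) m hm)
  have hb : ∃ b ∈ B1, f + 1 ≤ (B2.filter (fun m => ref m b)).card := by
    by_contra h
    push_neg at h
    have : ∑ b ∈ B1, (B2.filter (fun m => ref m b)).card ≤ B1.card * f := by
      calc ∑ b ∈ B1, (B2.filter (fun m => ref m b)).card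
          ≤ ∑ _b ∈ B1, f := Finset.sum_le_sum (fun b hb => Nat.lt_add_one_iff.mp (h b hb))
        _ = B1.card * f := by rw [Finset.sum_const, smul_eq_mul]
    have h2 : B1.card * f ≤ (3 * f + 1) * f := Nat.mul_le_mul_right _ (hsize (r + 1))
    have := le_trans hsum (le_trans this h2)
    nlinarith
  obtain ⟨b, hbB1, hbcount⟩ := hb
  refine ⟨(blocks r).filter (fun c => ref b c), Finset.filter_subset _ _,
    href r b hbB1, ?_⟩
  intro c hc b' hb'
  -- c references ≥ 2f+1 blocks of B2; b is referenced by ≥ f+1 blocks of B2; intersect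
  have hTc : 2 * f + 1 ≤ (B2.filter (fun m => ref c m)).card := href (r + 2) c hc
  have hinter : 0 < ((B2.filter (fun m => ref c m)) ∩ (B2.filter (fun m => ref m b))).card := by
    have hunion : ((B2.filter (fun m => ref c m)) ∪ (B2.filter (fun m => ref m b))).card ≤ 3 * f + 1 := by
      refine le_trans (Finset.card_le_card ?_) (hsize (r + 2))
      exact Finset.union_subset (Finset.filter_subset _ _) (Finset.filter_subset _ _)
    have := Finset.card_union_add_card_inter (B2.filter (fun m => ref c m)) (B2.filter (fun m => ref m b))
    omega
  obtain ⟨m, hm⟩ := Finset.card_pos.mp hinter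
  simp only [Finset.mem_inter, Finset.mem_filter] at hm
  have hb'' := Finset.mem_filter.mp hb'
  exact ⟨m, hm.1.1, b, hbB1, hm.1.2, hm.2.2, hb''.2⟩
end

section
/- Certificate quorum for the common core set (w=5): for any round r, there exists a set S of at least 2f+1 round-r blocks such that every block in S has at least 2f+1 certificates at round r+4, where a round-(r+4) block certifies a round-r block b if all 2f+1 of its round-(r+3) references vote for b. -/
/-- Generic quorum-intersection fact: two subsets of `U` whose cardinalities
sum to more than `|U|` intersect. -/
lemma quorum_intersect {α : Type*} [DecidableEq α] {A P U : Finset α}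
    (hA : A ⊆ U) (hP : P ⊆ U) (h : U.card < A.card + P.card) :
    ∃ x, x ∈ A ∧ x ∈ P := by
  have hUn : (A ∪ P).card ≤ U.card := Finset.card_le_card (Finset.union_subset hA hP)
  have hkey := Finset.card_inter_add_card_union A P
  have : 0 < (A ∩ P).card := by omega
  obtain ⟨x, hx⟩ := Finset.card_pos.mp this
  exact ⟨x, Finset.mem_inter.mp hx⟩

theorem common_core_certificate_quorum {α : Type*} [DecidableEq α]
    (f : ℕ) (blocks honest : ℕ → Finset α)
    (ref : α → α → Prop) [∀ a b, Decidable (ref a b)]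
    (hsize : ∀ r, (blocks r).card ≤ 3 * f + 1)
    (hhonest_sub : ∀ r, honest r ⊆ blocks r)
    (hhonest_card : ∀ r, 2 * f + 1 ≤ (honest r).card)
    (href : ∀ r, ∀ b ∈ blocks (r + 1),
      2 * f + 1 ≤ ((blocks r).filter (fun c => ref b c)).card)
    (r : ℕ) :
    -- there is a set S of ≥ 2f+1 round-r blocks such that every block of S
    -- has ≥ 2f+1 certificates at round r+4, where a round-(r+4) block c
    -- certifies b if every round-(r+3) block it references votes for b
    -- (i.e., has a path to b)
    ∃ S ⊆ blocks r, 2 * f + 1 ≤ S.card ∧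
      ∀ b ∈ S, ∃ C ⊆ blocks (r + 4), 2 * f + 1 ≤ C.card ∧
        ∀ c ∈ C, ∀ v ∈ blocks (r + 3), ref c v →
          ∃ m₂ ∈ blocks (r + 2), ∃ m₁ ∈ blocks (r + 1),
            ref v m₂ ∧ ref m₂ m₁ ∧ ref m₁ b := by
  -- round cardinalities
  have hcard : ∀ s, 2 * f + 1 ≤ (blocks s).card := fun s =>
    le_trans (hhonest_card s) (Finset.card_le_card (hhonest_sub s))
  -- Step 1: there is a round-(r+1) block referenced by ≥ f+1 round-(r+2) blocks.
  have hpop : ∃ m₁ ∈ blocks (r + 1),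
      f + 1 ≤ ((blocks (r + 2)).filter (fun c => ref c m₁)).card := by
    by_contra hcon
    push_neg at hcon
    have hle : ∀ m₁ ∈ blocks (r + 1),
        ((blocks (r + 2)).filter (fun c => ref c m₁)).card ≤ f := by
      intro m₁ hm₁; have := hcon m₁ hm₁; omega
    -- double counting
    have hswap : ∑ c ∈ blocks (r + 2), ((blocks (r + 1)).filter (fun m => ref c m)).card
        = ∑ m ∈ blocks (r + 1), ((blocks (r + 2)).filter (fun c => ref c m)).card := by
      simp only [Finset.card_filter]
      exact Finset.sum_comm
    have hlow : (blocks (r + 2)).card * (2 * f + 1)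
        ≤ ∑ c ∈ blocks (r + 2), ((blocks (r + 1)).filter (fun m => ref c m)).card := by
      rw [← smul_eq_mul]
      apply Finset.card_nsmul_le_sum
      intro c hc
      have : c ∈ blocks (r + 1 + 1) := by
        have e : r + 1 + 1 = r + 2 := by omega
        rw [e]; exact hc
      exact href (r + 1) c this
    have hhigh : ∑ m ∈ blocks (r + 1), ((blocks (r + 2)).filter (fun c => ref c m)).card
        ≤ (blocks (r + 1)).card * f := by
      rw [← smul_eq_mul]
      exact Finset.sum_le_card_nsmul _ _ _ hle
    have h1 : (2 * f + 1) * (2 * f + 1) ≤ (blocks (r + 2)).card * (2 * f + 1) :=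
      Nat.mul_le_mul_right _ (hcard (r + 2))
    have h2 : (blocks (r + 1)).card * f ≤ (3 * f + 1) * f :=
      Nat.mul_le_mul_right _ (hsize (r + 1))
    nlinarith [hswap, hlow, hhigh, h1, h2]
  obtain ⟨m₁, hm₁, hm₁pop⟩ := hpop
  -- S = round-r blocks referenced by m₁
  refine ⟨(blocks r).filter (fun b => ref m₁ b), Finset.filter_subset _ _, ?_, ?_⟩
  · exact href r m₁ hm₁
  · intro b hb
    have hrefb : ref m₁ b := (Finset.mem_filter.mp hb).2
    -- take C = all honest round-(r+4) blocks
    refine ⟨honest (r + 4), hhonest_sub (r + 4), hhonest_card (r + 4), ?_⟩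
    intro c _ v hv _
    -- v references ≥ 2f+1 round-(r+2) blocks; the referencers of m₁ number ≥ f+1;
    -- both live in blocks (r+2) of size ≤ 3f+1, so they intersect.
    have hvref : 2 * f + 1 ≤ ((blocks (r + 2)).filter (fun m => ref v m)).card := by
      have : v ∈ blocks (r + 2 + 1) := by
        have e : r + 2 + 1 = r + 3 := by omega
        rw [e]; exact hv
      exact href (r + 2) v this
    obtain ⟨m₂, hm₂A, hm₂P⟩ := quorum_intersect
      (Finset.filter_subset (fun m => ref v m) (blocks (r + 2)))
      (Finset.filter_subset (fun c => ref c m₁) (blocks (r + 2)))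
      (by have := hsize (r + 2); omega)
    obtain ⟨hm₂mem, hvm₂⟩ := Finset.mem_filter.mp hm₂A
    obtain ⟨_, hm₂m₁⟩ := Finset.mem_filter.mp hm₂P
    exact ⟨m₂, hm₂mem, m₁, hm₁, hvm₂, hm₂m₁, hrefb⟩
end

section
/- w=4 direct-certificate existence: in the layered DAG, for any round r there exists a block b at round r with at least 2f+1 certificates at round r+3, where a round-(r+3) block certifies b if it references ≥ 2f+1 round-(r+2) blocks all of which have a path to b. -/
theorem w4_direct_certificate_existence {α : Type*} [DecidableEq α]
    (f : ℕ) (blocks honest : ℕ → Finset α)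
    (ref : α → α → Prop) [∀ a b, Decidable (ref a b)]
    (hsize : ∀ r, (blocks r).card ≤ 3 * f + 1)
    (hhonest_sub : ∀ r, honest r ⊆ blocks r)
    (hhonest_card : ∀ r, 2 * f + 1 ≤ (honest r).card)
    (href : ∀ r, ∀ b ∈ blocks (r + 1),
      2 * f + 1 ≤ ((blocks r).filter (fun c => ref b c)).card)
    (r : ℕ) :
    -- there is a round-r block b with ≥ 2f+1 certificates at round r+3,
    -- where a round-(r+3) block c certifies b if it references ≥ 2f+1
    -- round-(r+2) blocks all of which have a path to b
    ∃ b ∈ blocks r, ∃ C ⊆ blocks (r + 3), 2 * f + 1 ≤ C.card ∧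
      ∀ c ∈ C, ∃ Vs ⊆ blocks (r + 2), 2 * f + 1 ≤ Vs.card ∧
        ∀ v ∈ Vs, ref c v ∧ ∃ m ∈ blocks (r + 1), ref v m ∧ ref m b := by
  set B0 := blocks r with hB0
  set B1 := blocks (r + 1) with hB1
  -- Step 1: find b ∈ B0 referenced by ≥ f+1 blocks of B1
  have hcount : ∃ b ∈ B0, f + 1 ≤ (B1.filter (fun m => ref m b)).card := by
    by_contra h
    push_neg at h
    have hle : ∀ b ∈ B0, (B1.filter (fun m => ref m b)).card ≤ f := by
      intro b hb
      have := h b hb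
      omega
    -- double counting
    have hsum_eq :
        ∑ m ∈ B1, ((B0.filter (fun c => ref m c)).card)
          = ∑ b ∈ B0, ((B1.filter (fun m => ref m b)).card) := by
      simp only [Finset.card_filter]
      exact Finset.sum_comm
    have hlow : (2 * f + 1) * B1.card ≤ ∑ m ∈ B1, ((B0.filter (fun c => ref m c)).card) := by
      calc (2 * f + 1) * B1.card = ∑ _m ∈ B1, (2 * f + 1) := by
            rw [Finset.sum_const, smul_eq_mul, Nat.mul_comm]
        _ ≤ _ := Finset.sum_le_sum (fun m hm => href r m hm)
    have hhigh : ∑ b ∈ B0, ((B1.filter (fun m => ref m b)).card) ≤ B0.card * f := by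
      calc ∑ b ∈ B0, ((B1.filter (fun m => ref m b)).card) ≤ ∑ _b ∈ B0, f :=
            Finset.sum_le_sum hle
        _ = B0.card * f := by rw [Finset.sum_const, smul_eq_mul]
    have hB1card : 2 * f + 1 ≤ B1.card :=
      le_trans (hhonest_card (r + 1)) (Finset.card_le_card (hhonest_sub (r + 1)))
    have hB0card : B0.card ≤ 3 * f + 1 := hsize r
    nlinarith [hsum_eq, hlow, hhigh]
  obtain ⟨b, hbB0, hbcard⟩ := hcount
  refine ⟨b, hbB0, honest (r + 3), hhonest_sub (r + 3), hhonest_card (r + 3), ?_⟩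
  intro c hc
  have hcB : c ∈ blocks ((r + 2) + 1) := by
    have := hhonest_sub (r + 3) hc
    simpa [show r + 3 = (r + 2) + 1 by ring] using this
  refine ⟨(blocks (r + 2)).filter (fun v => ref c v), Finset.filter_subset _ _,
    href (r + 2) c hcB, ?_⟩
  intro v hv
  rw [Finset.mem_filter] at hv
  refine ⟨hv.2, ?_⟩
  -- v ∈ blocks (r+2), references ≥ 2f+1 blocks of B1, which intersects S_b
  have hvB : v ∈ blocks ((r + 1) + 1) := by
    simpa [show r + 2 = (r + 1) + 1 by ring] using hv.1
  set Mv := B1.filter (fun m => ref v m) with hMv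
  set Sb := B1.filter (fun m => ref m b) with hSb
  have hMvcard : 2 * f + 1 ≤ Mv.card := href (r + 1) v hvB
  have hunion : (Mv ∪ Sb).card ≤ 3 * f + 1 := by
    refine le_trans (Finset.card_le_card ?_) (hsize (r + 1))
    exact Finset.union_subset (Finset.filter_subset _ _) (Finset.filter_subset _ _)
  have hinter : 0 < (Mv ∩ Sb).card := by
    have := Finset.card_union_add_card_inter Mv Sb
    omega
  obtain ⟨m, hm⟩ := Finset.card_pos.mp hinter
  rw [Finset.mem_inter, Finset.mem_filter, Finset.mem_filter] at hm
  exact ⟨m, hm.1.1, hm.1.2, hm.2.2⟩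
end

section
/- Prefix-consistency of decided slot sequences: suppose each of two agents assigns to every slot index a decision in {commit, skip, undecided}, the assignments agree wherever both slots are decided (neither is undecided), and an agent's delivered sequence is the list of committed slots up to its first undecided slot. Then one agent's delivered sequence of committed slot indices is a prefix of the other's. -/
lemma prefix_aux
    (d₁ d₂ : ℕ → Option Bool)
    (hagree : ∀ i, d₁ i ≠ none → d₂ i ≠ none → d₁ i = d₂ i)
    (N₁ N₂ : ℕ) (hle : N₁ ≤ N₂)
    (h₁ : ∀ i < N₁, d₁ i ≠ none)
    (h₂ : ∀ i < N₂, d₂ i ≠ none) :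
    ((List.range N₁).filter (fun i => d₁ i == some true)) <+:
        ((List.range N₂).filter (fun i => d₂ i == some true)) := by
  have heq : ((List.range N₁).filter (fun i => d₁ i == some true)) =
      ((List.range N₁).filter (fun i => d₂ i == some true)) := by
    apply List.filter_congr
    intro i hi
    have hi' := List.mem_range.mp hi
    rw [hagree i (h₁ i hi') (h₂ i (lt_of_lt_of_le hi' hle))]
  rw [heq]
  obtain ⟨k, rfl⟩ := Nat.exists_eq_add_of_le hle
  rw [List.range_add, List.filter_append]
  exact List.prefix_append _ _

theorem prefix_consistency
    (d₁ d₂ : ℕ → Option Bool)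
    (hagree : ∀ i, d₁ i ≠ none → d₂ i ≠ none → d₁ i = d₂ i)
    (N₁ N₂ : ℕ)
    (h₁ : ∀ i < N₁, d₁ i ≠ none) (h₁' : d₁ N₁ = none)
    (h₂ : ∀ i < N₂, d₂ i ≠ none) (h₂' : d₂ N₂ = none) :
    ((List.range N₁).filter (fun i => d₁ i == some true)) <+:
        ((List.range N₂).filter (fun i => d₂ i == some true)) ∨
    ((List.range N₂).filter (fun i => d₂ i == some true)) <+:
        ((List.range N₁).filter (fun i => d₁ i == some true)) := by
  rcases le_total N₁ N₂ with h | h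
  · exact Or.inl (prefix_aux d₁ d₂ hagree N₁ N₂ h h₁ h₂)
  · exact Or.inr (prefix_aux d₂ d₁ (fun i a b => (hagree i b a).symm) N₂ N₁ h h₂ h₁)
end
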